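/- There exists an adjacency matrix A maximizing the spectral radius λ₁ over M(D) (the set of adjacency matrices of simple graphs with non-increasing degree sequence D) which is a sink of the oriented graph G(D); that is, A admits no negative symmetric checkerboard: there are no distinct indices i<j, k<l with a_{il}=a_{jk}=1 and a_{ik}=a_{jl}=0 whose positive switch would strictly change A. -/

import Mathlib

/-- The largest eigenvalue of a real symmetric matrix, via its Rayleigh-quotient
characterization `λ₁(A) = max_{‖x‖₂ = 1} xᵀ A x`. -/
noncomputable def lam1 {n : ℕ} (A : Matrix (Fin n) (Fin n) ℝ) : ℝ :=
  sSup {r | ∃ x : Fin n → ℝ, (∑ u, x u ^ 2) = 1 ∧ r = dotProduct x (A.mulVec x)}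

/-- `M(D)`: symmetric (0,1)-matrices with zero diagonal and row sums `D`. -/
def MemMD {n : ℕ} (D : Fin n → ℕ) (A : Matrix (Fin n) (Fin n) ℝ) : Prop :=
  (∀ u v, A u v = 0 ∨ A u v = 1) ∧ A.IsSymm ∧ (∀ u, A u u = 0) ∧
  (∀ u, ∑ v, A u v = (D u : ℝ))

/-!
Among all pairs `(A, x)` with `A` a maximizer of `λ₁` over `M(D)` and `x ≥ 0` a unit vector
attaining `λ₁(A)`, pick one maximizing the weight `∑ u, -u * x u`. Then `x` is non-increasing:
if `x i < x j` for `i < j`, relabelling `i ↔ j` and moving `D i - D j` private neighbours back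
(possible as `D j ≤ D i`) gives a maximizer attained at `x` with `x i, x j` exchanged, of larger
weight. For a non-increasing `x`, the switch of a checkerboard at `i < j`, `k < l` changes `xᵀAx`
by `2 (x i - x j) (x k - x l) ≥ 0`, so it preserves the set of maximizers attained at `x`; a
member of that set maximizing `wᵀAw` for `w u = -u` is a sink, since the switch raises `wᵀAw` by
`2 (w i - w j) (w k - w l) > 0`.
-/

open Matrix Finset

section Rayleigh

variable {n : ℕ}

def unitVecs (n : ℕ) : Set (Fin n → ℝ) := {x | ∑ u, x u ^ 2 = 1}

lemma isCompact_unitVecs : IsCompact (unitVecs n) := by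
  refine Metric.isCompact_of_isClosed_isBounded (isClosed_eq (by fun_prop) continuous_const)
    ((Metric.isBounded_closedBall (x := 0) (r := 1)).subset fun x hx => ?_)
  rw [Metric.mem_closedBall, dist_zero_right, pi_norm_le_iff_of_nonneg zero_le_one]
  intro u
  rw [Real.norm_eq_abs, ← sq_le_one_iff_abs_le_one]
  exact hx ▸ single_le_sum (f := fun u => x u ^ 2) (fun v _ => sq_nonneg (x v)) (mem_univ u)

lemma continuous_dotProduct_mulVec (A : Matrix (Fin n) (Fin n) ℝ) :
    Continuous fun x : Fin n → ℝ => x ⬝ᵥ A *ᵥ x :=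
  continuous_id.dotProduct (continuous_const.matrix_mulVec continuous_id)

lemma lam1_eq_sSup_image (A : Matrix (Fin n) (Fin n) ℝ) :
    lam1 A = sSup ((fun x => x ⬝ᵥ A *ᵥ x) '' unitVecs n) := by
  simp only [lam1, Set.image, unitVecs, Set.mem_ofPred_eq, eq_comm (a := dotProduct _ _)]

lemma le_lam1 (A : Matrix (Fin n) (Fin n) ℝ) {x : Fin n → ℝ} (hx : x ∈ unitVecs n) :
    x ⬝ᵥ A *ᵥ x ≤ lam1 A :=
  lam1_eq_sSup_image A ▸ le_csSup
    (isCompact_unitVecs.bddAbove_image (continuous_dotProduct_mulVec A).continuousOn) ⟨x, hx, rfl⟩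

lemma dotProduct_mulVec_le_abs {A : Matrix (Fin n) (Fin n) ℝ} (hA : ∀ u v, 0 ≤ A u v)
    (x : Fin n → ℝ) : x ⬝ᵥ A *ᵥ x ≤ |x| ⬝ᵥ A *ᵥ |x| := by
  simp only [dotProduct, mulVec, mul_sum, Pi.abs_apply]
  refine sum_le_sum fun u _ => sum_le_sum fun v _ => ?_
  calc x u * (A u v * x v) ≤ |x u * (A u v * x v)| := le_abs_self _
    _ = |x u| * (A u v * |x v|) := by rw [abs_mul, abs_mul, abs_of_nonneg (hA u v)]

lemma exists_nonneg_dotProduct_mulVec_eq_lam1 [NeZero n] {A : Matrix (Fin n) (Fin n) ℝ}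
    (hA : ∀ u v, 0 ≤ A u v) : ∃ x ∈ unitVecs n, 0 ≤ x ∧ x ⬝ᵥ A *ᵥ x = lam1 A := by
  have hne : (unitVecs n).Nonempty := ⟨Pi.single 0 1, by simp [unitVecs, sq, Pi.single_apply]⟩
  obtain ⟨z, hz, hzmax⟩ :=
    isCompact_unitVecs.exists_isMaxOn hne (continuous_dotProduct_mulVec A).continuousOn
  have hlam : lam1 A = z ⬝ᵥ A *ᵥ z := by
    rw [lam1_eq_sSup_image]
    exact IsGreatest.csSup_eq ⟨⟨z, hz, rfl⟩, Set.forall_mem_image.2 fun y hy => hzmax hy⟩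
  have habs : |z| ∈ unitVecs n := by simpa [unitVecs, Pi.abs_apply, sq_abs] using hz
  refine ⟨|z|, habs, abs_nonneg z, le_antisymm (le_lam1 A habs) ?_⟩
  exact hlam ▸ dotProduct_mulVec_le_abs hA z

end Rayleigh

section MoveEdges

variable {ι : Type*}

lemma dotProduct_submatrix_mulVec [Fintype ι] (A : Matrix ι ι ℝ) (σ : ι ≃ ι) (x : ι → ℝ) :
    (x ∘ σ) ⬝ᵥ A.submatrix σ σ *ᵥ (x ∘ σ) = x ⬝ᵥ A *ᵥ x := by
  simp only [dotProduct, mulVec, Function.comp_apply, submatrix_apply]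
  rw [← Equiv.sum_comp σ fun u => x u * ∑ v, A u v * x v]
  exact sum_congr rfl fun u _ => by rw [← Equiv.sum_comp σ fun v => A (σ u) v * x v]

variable [DecidableEq ι]

/-- Vertex `a` gains, and vertex `b` loses, the neighbours weighted by `g`. -/
def moveEdges (A : Matrix ι ι ℝ) (a b : ι) (g : ι → ℝ) : Matrix ι ι ℝ :=
  A + vecMulVec (Pi.single a 1 - Pi.single b 1) g + vecMulVec g (Pi.single a 1 - Pi.single b 1)

lemma moveEdges_apply (A : Matrix ι ι ℝ) (a b : ι) (g : ι → ℝ) (u v : ι) :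
    moveEdges A a b g u v = A u v + (Pi.single a 1 - Pi.single b 1 : ι → ℝ) u * g v
      + g u * (Pi.single a 1 - Pi.single b 1 : ι → ℝ) v :=
  rfl

lemma comp_swap_eq_add (x : ι → ℝ) (i j : ι) :
    x ∘ Equiv.swap i j = x + (x j - x i) • (Pi.single i 1 - Pi.single j 1) := by
  ext u
  rcases eq_or_ne u i with rfl | hui
  · by_cases h : u = j <;> simp [h]
  rcases eq_or_ne u j with rfl | huj
  · simp [hui]
  · simp [Equiv.swap_apply_of_ne_of_ne hui huj, hui, huj]

lemma single_sub_single_dotProduct [Fintype ι] (a b : ι) (x : ι → ℝ) :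
    (Pi.single a 1 - Pi.single b 1) ⬝ᵥ x = x a - x b := by
  simp [sub_dotProduct]

lemma dotProduct_moveEdges_mulVec [Fintype ι] (A : Matrix ι ι ℝ) (a b : ι) (g x : ι → ℝ) :
    x ⬝ᵥ moveEdges A a b g *ᵥ x = x ⬝ᵥ A *ᵥ x + 2 * ((x a - x b) * (g ⬝ᵥ x)) := by
  simp only [moveEdges, add_mulVec, vecMulVec_mulVec, op_smul_eq_smul, dotProduct_add,
    dotProduct_smul, smul_eq_mul, dotProduct_comm x (Pi.single a 1 - Pi.single b 1),
    dotProduct_comm x g, single_sub_single_dotProduct]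
  ring

end MoveEdges

section DegreeClass

variable {n : ℕ} {D : Fin n → ℕ} {A : Matrix (Fin n) (Fin n) ℝ}

lemma MemMD.nonneg (hA : MemMD D A) (u v : Fin n) : 0 ≤ A u v := by
  rcases hA.1 u v with h | h <;> simp [h]

lemma MemMD.submatrix (hA : MemMD D A) (σ : Fin n ≃ Fin n) :
    MemMD (D ∘ σ) (A.submatrix σ σ) := by
  obtain ⟨h01, hsymm, hdiag, hrow⟩ := hA
  refine ⟨fun u v => h01 _ _, hsymm.submatrix σ, fun u => hdiag _, fun u => ?_⟩
  simpa [Equiv.sum_comp σ (A (σ u))] using hrow (σ u)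

lemma finite_setOf_memMD (D : Fin n → ℕ) : {A : Matrix (Fin n) (Fin n) ℝ | MemMD D A}.Finite :=
  (Set.Finite.pi fun _ => Set.Finite.pi fun _ => ({0, 1} : Set ℝ).toFinite).subset
    fun _ hA u _ v _ => hA.1 u v

lemma memMD_moveEdges {D' : Fin n → ℕ} (hA : MemMD D A) {a b : Fin n} (hab : a ≠ b)
    {g : Fin n → ℝ} (hga : g a = 0) (hgb : g b = 0)
    (ha : ∀ w, A a w + g w = 0 ∨ A a w + g w = 1) (hb : ∀ w, A b w - g w = 0 ∨ A b w - g w = 1)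
    (hD' : ∀ u, (D' u : ℝ) = D u + (Pi.single a 1 - Pi.single b 1 : Fin n → ℝ) u * ∑ w, g w) :
    MemMD D' (moveEdges A a b g) := by
  obtain ⟨h01, hsymm, hdiag, hrow⟩ := hA
  refine ⟨fun u v => ?_, ?_, fun u => ?_, fun u => ?_⟩
  · rcases eq_or_ne u a with rfl | hua
    · simpa [moveEdges_apply, hab, hga] using ha v
    rcases eq_or_ne u b with rfl | hub
    · simpa [moveEdges_apply, hab.symm, hgb, sub_eq_add_neg] using hb v
    rcases eq_or_ne v a with rfl | hva
    · simpa [moveEdges_apply, hua, hub, hab, hsymm.apply] using ha u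
    rcases eq_or_ne v b with rfl | hvb
    · simpa [moveEdges_apply, hua, hub, hab.symm, hsymm.apply, sub_eq_add_neg] using hb u
    · simpa [moveEdges_apply, hua, hub, hva, hvb] using h01 u v
  · rw [IsSymm, moveEdges, transpose_add, transpose_add, transpose_vecMulVec, transpose_vecMulVec,
      hsymm.eq, add_right_comm]
  · rcases eq_or_ne u a with rfl | hua
    · simp [moveEdges_apply, hdiag, hga]
    rcases eq_or_ne u b with rfl | hub
    · simp [moveEdges_apply, hdiag, hgb]
    · simp [moveEdges_apply, hdiag, hua, hub]
  · simp [moveEdges_apply, sum_add_distrib, ← mul_sum, hrow, hD', sum_sub_distrib]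

lemma MemMD.switch (hA : MemMD D A) {i j k l : Fin n} (hij : i ≠ j) (hkl : k ≠ l)
    (hik : i ≠ k) (hil : i ≠ l) (hjk : j ≠ k) (hjl : j ≠ l)
    (hAil : A i l = 1) (hAjk : A j k = 1) (hAik : A i k = 0) (hAjl : A j l = 0) :
    MemMD D (moveEdges A i j (Pi.single k 1 - Pi.single l 1)) := by
  refine memMD_moveEdges hA hij (by simp [hik, hil]) (by simp [hjk, hjl])
    (fun w => ?_) (fun w => ?_) (fun u => by simp [sum_sub_distrib])
  · rcases eq_or_ne w k with rfl | hwk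
    · simp [hAik, hkl]
    rcases eq_or_ne w l with rfl | hwl
    · simp [hAil, hkl.symm]
    · simpa [hwk, hwl] using hA.1 i w
  · rcases eq_or_ne w k with rfl | hwk
    · simp [hAjk, hkl]
    rcases eq_or_ne w l with rfl | hwl
    · simp [hAjl, hkl.symm]
    · simpa [hwk, hwl] using hA.1 j w

lemma MemMD.exists_card_eq_sub (hA : MemMD D A) {i j : Fin n} (hij : i ≠ j) (hD : D j ≤ D i) :
    ∃ T : Finset (Fin n), (∀ w ∈ T, w ≠ i ∧ w ≠ j ∧ A i w = 1 ∧ A j w = 0) ∧ #T = D i - D j := by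
  classical
  obtain ⟨h01, hsymm, hdiag, hrow⟩ := hA
  set W : Finset (Fin n) := {w | w ≠ i ∧ w ≠ j ∧ A i w = 1 ∧ A j w = 0}
  suffices hW : ((D i : ℝ) - D j) ≤ #W by
    obtain ⟨T, hTW, hT⟩ := exists_subset_card_eq (s := W) (n := D i - D j)
      (by have : (D i : ℝ) ≤ #W + D j := by linarith
          exact Nat.sub_le_of_le_add (by exact_mod_cast this))
    exact ⟨T, fun w hw => (mem_filter.1 (hTW hw)).2, hT⟩
  -- the terms `v = i` and `v = j` of `∑ v, (A i v - A j v)` cancel, as `A i j = A j i`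
  have hle : ∀ v, A i v - A j v ≤ (if v ∈ W then 1 else 0)
      + (if v = j then A i j else 0) - (if v = i then A j i else 0) := by
    intro v
    rcases eq_or_ne v i with rfl | hvi
    · simp [W, hdiag, hij]
    rcases eq_or_ne v j with rfl | hvj
    · simp [W, hdiag, hvi]
    rcases h01 i v with h | h <;> rcases h01 j v with h' | h' <;> simp [W, h, h', hvi, hvj]
  calc ((D i : ℝ) - D j) = ∑ v, (A i v - A j v) := by rw [sum_sub_distrib, hrow, hrow]
    _ ≤ _ := sum_le_sum fun v _ => hle v
    _ = #W := by simp [sum_add_distrib, sum_sub_distrib, hsymm.apply i j]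

lemma MemMD.exists_swap_le (hA : MemMD D A) {i j : Fin n} (hij : i ≠ j) (hD : D j ≤ D i)
    {x : Fin n → ℝ} (hx : 0 ≤ x) (hxij : x i ≤ x j) :
    ∃ B, MemMD D B ∧ x ⬝ᵥ A *ᵥ x ≤ (x ∘ Equiv.swap i j) ⬝ᵥ B *ᵥ (x ∘ Equiv.swap i j) := by
  classical
  obtain ⟨T, hT, hcard⟩ := hA.exists_card_eq_sub hij hD
  set g : Fin n → ℝ := fun w => if w ∈ T then 1 else 0
  have hiT : i ∉ T := fun h => (hT i h).1 rfl
  have hjT : j ∉ T := fun h => (hT j h).2.1 rfl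
  have hg : ∑ w, g w = D i - D j := by simp [g, hcard, Nat.cast_sub hD]
  have hA' : MemMD (D ∘ Equiv.swap i j) (moveEdges A j i g) := by
    refine memMD_moveEdges hA hij.symm (by simp [g, hjT]) (by simp [g, hiT])
      (fun w => ?_) (fun w => ?_) (fun u => ?_)
    · by_cases hw : w ∈ T
      · simp [g, hw, (hT w hw).2.2.2]
      · simpa [g, hw] using hA.1 j w
    · by_cases hw : w ∈ T
      · simp [g, hw, (hT w hw).2.2.1]
      · simpa [g, hw] using hA.1 i w
    · rw [hg]
      rcases eq_or_ne u i with rfl | hui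
      · simp [hij]
      rcases eq_or_ne u j with rfl | huj
      · simp [hui]
      · simp [Equiv.swap_apply_of_ne_of_ne hui huj, hui, huj]
  have hgx : 0 ≤ g ⬝ᵥ x := sum_nonneg fun w _ => by
    by_cases hw : w ∈ T
    · simpa [g, hw] using hx w
    · simp [g, hw]
  refine ⟨(moveEdges A j i g).submatrix (Equiv.swap i j) (Equiv.swap i j), ?_, ?_⟩
  · have hD' : D ∘ Equiv.swap i j ∘ Equiv.swap i j = D := by ext u; simp
    exact hD' ▸ hA'.submatrix (Equiv.swap i j)
  · rw [dotProduct_submatrix_mulVec, dotProduct_moveEdges_mulVec]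
    nlinarith [mul_nonneg (sub_nonneg.2 hxij) hgx]

def HasCheckerboard (A : Matrix (Fin n) (Fin n) ℝ) : Prop :=
  ∃ i j k l : Fin n, i < j ∧ k < l ∧ i ≠ k ∧ i ≠ l ∧ j ≠ k ∧ j ≠ l ∧
    A i l = 1 ∧ A j k = 1 ∧ A i k = 0 ∧ A j l = 0

lemma strictAnti_neg_val : StrictAnti fun u : Fin n => -(u : ℝ) :=
  fun i j h => by simpa using h

lemma exists_antitone_maximizing_vector [NeZero n] (hD : Antitone D) (hne : ∃ A, MemMD D A) :
    ∃ Λ : ℝ, (∀ B, MemMD D B → lam1 B ≤ Λ) ∧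
      ∃ A, MemMD D A ∧ ∃ x ∈ unitVecs n, Antitone x ∧ x ⬝ᵥ A *ᵥ x = Λ := by
  obtain ⟨A₀, hA₀, hmax⟩ := Set.exists_max_image _ lam1 (finite_setOf_memMD D) hne
  set K := ⋃ A ∈ {A | MemMD D A}, unitVecs n ∩ {x | 0 ≤ x ∧ x ⬝ᵥ A *ᵥ x = lam1 A₀}
  have hK : IsCompact K := (finite_setOf_memMD D).isCompact_biUnion fun A _ =>
    isCompact_unitVecs.inter_right ((isClosed_le continuous_const continuous_id).inter
      (isClosed_eq (continuous_dotProduct_mulVec A) continuous_const))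
  have hKne : K.Nonempty := by
    obtain ⟨x, hx, hx0, hxA⟩ := exists_nonneg_dotProduct_mulVec_eq_lam1 hA₀.nonneg
    exact ⟨x, Set.mem_biUnion hA₀ ⟨hx, hx0, hxA⟩⟩
  set w : Fin n → ℝ := fun u => -(u : ℝ)
  obtain ⟨x, hxK, hxmax⟩ := hK.exists_isMaxOn hKne
    (continuous_const.dotProduct continuous_id : Continuous (w ⬝ᵥ ·)).continuousOn
  obtain ⟨A, hA, hx, hx0, hxA⟩ := Set.mem_iUnion₂.1 hxK
  refine ⟨lam1 A₀, hmax, A, hA, x, hx, antitone_iff_forall_lt.2 fun i j hij => ?_, hxA⟩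
  by_contra! hlt
  obtain ⟨B, hB, hle⟩ := hA.exists_swap_le hij.ne (hD hij.le) hx0 hlt.le
  have hy : x ∘ Equiv.swap i j ∈ unitVecs n :=
    (Equiv.sum_comp (Equiv.swap i j) fun u => x u ^ 2).trans hx
  have hyK : x ∘ Equiv.swap i j ∈ K := Set.mem_biUnion hB ⟨hy, fun u => hx0 (Equiv.swap i j u),
    le_antisymm ((le_lam1 B hy).trans (hmax B hB)) (hxA ▸ hle)⟩
  have hwx : w ⬝ᵥ (x ∘ Equiv.swap i j) ≤ w ⬝ᵥ x := hxmax hyK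
  rw [comp_swap_eq_add, dotProduct_add, dotProduct_smul, smul_eq_mul,
    dotProduct_comm w (Pi.single i 1 - _), single_sub_single_dotProduct] at hwx
  nlinarith [mul_pos (sub_pos.2 hlt) (sub_pos.2 (strictAnti_neg_val hij))]

lemma exists_not_hasCheckerboard {Λ : ℝ} (hmax : ∀ B, MemMD D B → lam1 B ≤ Λ) (hA : MemMD D A)
    {x : Fin n → ℝ} (hx : x ∈ unitVecs n) (hanti : Antitone x) (hxA : x ⬝ᵥ A *ᵥ x = Λ) :
    ∃ A, MemMD D A ∧ (∀ B, MemMD D B → lam1 B ≤ lam1 A) ∧ ¬ HasCheckerboard A := by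
  set w : Fin n → ℝ := fun u => -(u : ℝ)
  obtain ⟨A₁, ⟨hA₁, hxA₁⟩, hA₁max⟩ := Set.exists_max_image {A | MemMD D A ∧ x ⬝ᵥ A *ᵥ x = Λ}
    (fun A => w ⬝ᵥ A *ᵥ w) ((finite_setOf_memMD D).subset fun _ h => h.1) ⟨A, hA, hxA⟩
  refine ⟨A₁, hA₁, fun B hB => (hmax B hB).trans (hxA₁ ▸ le_lam1 A₁ hx), ?_⟩
  rintro ⟨i, j, k, l, hij, hkl, hik, hil, hjk, hjl, hAil, hAjk, hAik, hAjl⟩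
  have hA' := hA₁.switch hij.ne hkl.ne hik hil hjk hjl hAil hAjk hAik hAjl
  have hxA' : x ⬝ᵥ moveEdges A₁ i j (Pi.single k 1 - Pi.single l 1) *ᵥ x = Λ := by
    refine le_antisymm ((le_lam1 _ hx).trans (hmax _ hA')) ?_
    rw [dotProduct_moveEdges_mulVec, single_sub_single_dotProduct, hxA₁]
    nlinarith [mul_nonneg (sub_nonneg.2 (hanti hij.le)) (sub_nonneg.2 (hanti hkl.le))]
  have := hA₁max _ ⟨hA', hxA'⟩
  simp only [dotProduct_moveEdges_mulVec, single_sub_single_dotProduct] at this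
  nlinarith [mul_pos (sub_pos.2 (strictAnti_neg_val hij)) (sub_pos.2 (strictAnti_neg_val hkl))]

end DegreeClass

/-- for a non-increasing degree sequence `D` with `M(D)` nonempty,
there is a maximizer of `λ₁` over `M(D)` that is a sink of `G(D)`, i.e. that admits
no negative symmetric checkerboard. -/
theorem stmt13 {n : ℕ} (D : Fin (n + 1) → ℕ) (hD : Antitone D)
    (hne : ∃ B, MemMD D B) :
    ∃ A : Matrix (Fin (n + 1)) (Fin (n + 1)) ℝ, MemMD D A ∧
      (∀ B, MemMD D B → lam1 B ≤ lam1 A) ∧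
      ¬ ∃ i j k l : Fin (n + 1), i < j ∧ k < l ∧
        i ≠ k ∧ i ≠ l ∧ j ≠ k ∧ j ≠ l ∧
        A i l = 1 ∧ A j k = 1 ∧ A i k = 0 ∧ A j l = 0 := by
  obtain ⟨Λ, hmax, A, hA, x, hx, hanti, hxA⟩ := exists_antitone_maximizing_vector hD hne
  exact exists_not_hasCheckerboard hmax hA hx hanti hxA
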